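/- McDiarmid's inequality: if X₁,…,X_m are independent random variables with values in a space 𝒳, and f : 𝒳^m → ℝ satisfies the bounded differences condition |f(x₁,…,x_i,…,x_m) − f(x₁,…,x_i',…,x_m)| ≤ c_i for all inputs and all i, then for every ε > 0, P[f(X₁,…,X_m) − E[f(X₁,…,X_m)] ≥ ε] ≤ exp(−2ε² / Σ_i c_i²). -/

import Mathlib

/-!
Reveal the coordinates one at a time. Integrating out the first coordinate of `f` leaves a
function of the others that still has bounded differences, while for fixed values of the others
`f` minus this average is centred and has oscillation at most `c₀` in the first coordinate, hence
is sub-Gaussian with parameter `(c₀ / 2)²` by Hoeffding's lemma. Sub-Gaussian parameters add over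
such a split of a product measure, so by induction `f - 𝔼 f` is sub-Gaussian with parameter
`∑ cᵢ² / 4` under any product of probability measures. Independence makes the law of
`(X₁, …, X_m)` such a product, and the Chernoff bound gives `exp (-ε² / (2 ∑ cᵢ² / 4))`.
-/

open MeasureTheory ProbabilityTheory Real
open scoped NNReal

universe u

namespace ProbabilityTheory

section Oscillation

variable {α : Type*} [MeasurableSpace α] {μ : Measure α} [IsProbabilityMeasure μ] {Z : α → ℝ}
  {c : ℝ≥0}

lemma integrable_of_abs_sub_le (hZ : AEMeasurable Z μ) (h : ∀ x y, |Z x - Z y| ≤ c) :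
    Integrable Z μ := by
  obtain ⟨x₀⟩ := nonempty_of_isProbabilityMeasure μ
  refine .of_mem_Icc (Z x₀ - c) (Z x₀ + c) hZ (ae_of_all _ fun x ↦ ?_)
  have := abs_le.1 (h x x₀)
  constructor <;> linarith

lemma hasSubgaussianMGF_sub_integral_of_abs_sub_le (hZ : AEMeasurable Z μ)
    (h : ∀ x y, |Z x - Z y| ≤ c) :
    HasSubgaussianMGF (fun x ↦ Z x - μ[Z]) ((c / 2) ^ 2) μ := by
  have : Nonempty α := nonempty_of_isProbabilityMeasure μ
  have hbdd : BddAbove (Set.range Z) := ⟨Z (Classical.arbitrary α) + c, by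
    rintro _ ⟨x, rfl⟩; linarith [(abs_le.1 (h x (Classical.arbitrary α))).2]⟩
  have hmem : ∀ x, Z x ∈ Set.Icc ((⨆ y, Z y) - c) (⨆ y, Z y) := fun x ↦
    ⟨sub_le_iff_le_add.2 <| ciSup_le fun y ↦ by linarith [(abs_le.1 (h y x)).2],
      le_ciSup hbdd x⟩
  simpa [Real.nnnorm_of_nonneg c.2] using hasSubgaussianMGF_of_mem_Icc hZ (ae_of_all _ hmem)

end Oscillation

lemma HasSubgaussianMGF.mgf_add_const_le {Ω : Type*} [MeasurableSpace Ω] {μ : Measure Ω}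
    {X : Ω → ℝ} {c : ℝ≥0} (h : HasSubgaussianMGF X c μ) (b t : ℝ) :
    mgf (fun ω ↦ X ω + b) μ t ≤ exp (c * t ^ 2 / 2) * exp (t * b) := by
  rw [mgf_add_const]
  gcongr
  exact h.mgf_le t

section Product

variable {α β : Type*} [MeasurableSpace α] [MeasurableSpace β] {ν : Measure α} {ρ : Measure β}
  [SFinite ν] [SFinite ρ] {A : α × β → ℝ} {B : β → ℝ} {cA cB : ℝ≥0}

lemma integrable_exp_mul_prod_add (hAm : Measurable A)
    (hA : ∀ y, HasSubgaussianMGF (fun x ↦ A (x, y)) cA ν) (hB : HasSubgaussianMGF B cB ρ)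
    (t : ℝ) : Integrable (fun p ↦ exp (t * (A p + B p.2))) (ν.prod ρ) := by
  have hmeas : AEStronglyMeasurable (fun p ↦ exp (t * (A p + B p.2))) (ν.prod ρ) :=
    ((hAm.aemeasurable.add hB.aemeasurable.comp_snd).const_mul t).exp.aestronglyMeasurable
  refine (integrable_prod_iff' hmeas).2 ⟨ae_of_all _ fun y ↦ ?_, ?_⟩
  · simp_rw [mul_add, exp_add]
    exact ((hA y).integrable_exp_mul t).mul_const _
  · simp_rw [Real.norm_of_nonneg (exp_nonneg _)]
    refine ((hB.integrable_exp_mul t).const_mul (exp (cA * t ^ 2 / 2))).mono' ?_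
      (ae_of_all _ fun y ↦ ?_)
    · have hsection : (fun y ↦ ∫ x, exp (t * (A (x, y) + B y)) ∂ν) =
          fun y ↦ mgf (fun x ↦ A (x, y)) ν t * exp (t * B y) := funext fun y ↦ mgf_add_const (B y)
      rw [hsection]
      exact (hAm.const_mul t).exp.stronglyMeasurable.integral_prod_left'.aestronglyMeasurable.mul
        (hB.aemeasurable.const_mul t).exp.aestronglyMeasurable
    · rw [Real.norm_of_nonneg (integral_nonneg fun _ ↦ exp_nonneg _)]
      exact (hA y).mgf_add_const_le (B y) t

lemma hasSubgaussianMGF_prod_add (hAm : Measurable A)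
    (hA : ∀ y, HasSubgaussianMGF (fun x ↦ A (x, y)) cA ν) (hB : HasSubgaussianMGF B cB ρ) :
    HasSubgaussianMGF (fun p ↦ A p + B p.2) (cA + cB) (ν.prod ρ) := by
  refine ⟨integrable_exp_mul_prod_add hAm hA hB, fun t ↦ ?_⟩
  calc mgf (fun p ↦ A p + B p.2) (ν.prod ρ) t
      = ∫ y, mgf (fun x ↦ A (x, y) + B y) ν t ∂ρ :=
        integral_prod_symm _ (integrable_exp_mul_prod_add hAm hA hB t)
    _ ≤ ∫ y, exp (cA * t ^ 2 / 2) * exp (t * B y) ∂ρ :=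
        integral_mono_of_nonneg (ae_of_all _ fun y ↦ mgf_nonneg)
          ((hB.integrable_exp_mul t).const_mul _) (ae_of_all _ fun y ↦ (hA y).mgf_add_const_le _ t)
    _ = exp (cA * t ^ 2 / 2) * mgf B ρ t := integral_const_mul _ _
    _ ≤ exp (cA * t ^ 2 / 2) * exp (cB * t ^ 2 / 2) := by gcongr; exact hB.mgf_le t
    _ = exp (↑(cA + cB) * t ^ 2 / 2) := by rw [← exp_add]; push_cast; ring_nf

lemma hasSubgaussianMGF_prod_sub_integral [IsProbabilityMeasure ν] [IsProbabilityMeasure ρ]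
    {F : α × β → ℝ} (hF : Measurable F) (hosc : ∀ x x' y, |F (x, y) - F (x', y)| ≤ cA)
    (hB : HasSubgaussianMGF (fun y ↦ ∫ x, F (x, y) ∂ν - ∫ y', ∫ x, F (x, y') ∂ν ∂ρ) cB ρ) :
    HasSubgaussianMGF (fun p ↦ F p - ∫ q, F q ∂(ν.prod ρ)) ((cA / 2) ^ 2 + cB) (ν.prod ρ) := by
  have hsection (y : β) := hasSubgaussianMGF_sub_integral_of_abs_sub_le (μ := ν)
    (hF.comp measurable_prodMk_right).aemeasurable fun x x' ↦ hosc x x' y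
  have hg : Measurable fun y ↦ ∫ x, F (x, y) ∂ν :=
    hF.stronglyMeasurable.integral_prod_left'.measurable
  have hsum : HasSubgaussianMGF (fun p ↦ F p - ∫ y', ∫ x, F (x, y') ∂ν ∂ρ)
      ((cA / 2) ^ 2 + cB) (ν.prod ρ) := by
    convert hasSubgaussianMGF_prod_add (A := fun p ↦ F p - ∫ x, F (x, p.2) ∂ν)
      (hF.sub (hg.comp measurable_snd)) hsection hB using 2 with p
    ring
  have hint : Integrable F (ν.prod ρ) := by
    simpa [sub_eq_add_neg, integrable_add_const_iff] using hsum.integrable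
  rwa [integral_prod_symm F hint]

end Product

section BoundedDifferences

def HasBoundedDifferences {ι : Type*} [DecidableEq ι] {α : ι → Type*} (f : (∀ i, α i) → ℝ)
    (c : ι → ℝ≥0) : Prop :=
  ∀ x i (y : α i), |f x - f (Function.update x i y)| ≤ c i

namespace HasBoundedDifferences

variable {n : ℕ} {α : Fin (n + 1) → Type*} {f : (∀ i, α i) → ℝ} {c : Fin (n + 1) → ℝ≥0}

lemma abs_sub_insertNth_le (hf : HasBoundedDifferences f c) (p : Fin (n + 1)) (x x' : α p)
    (y : ∀ j, α (p.succAbove j)) : |f (p.insertNth x y) - f (p.insertNth x' y)| ≤ c p := by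
  simpa using hf (p.insertNth x y) p x'

lemma comp_insertNth (hf : HasBoundedDifferences f c) (p : Fin (n + 1)) (x : α p) :
    HasBoundedDifferences (fun y ↦ f (p.insertNth x y)) (fun j ↦ c (p.succAbove j)) :=
  fun y j z ↦ by simpa using hf (p.insertNth x y) (p.succAbove j) z

end HasBoundedDifferences

lemma HasBoundedDifferences.integral {ι γ : Type*} [DecidableEq ι] {α : ι → Type*}
    [MeasurableSpace γ] {ν : Measure γ} [IsProbabilityMeasure ν] {F : γ → (∀ i, α i) → ℝ}
    {c : ι → ℝ≥0} (hF : ∀ z, HasBoundedDifferences (F z) c)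
    (hint : ∀ y, Integrable (fun z ↦ F z y) ν) :
    HasBoundedDifferences (fun y ↦ ∫ z, F z y ∂ν) c := by
  intro y i w
  rw [← integral_sub (hint _) (hint _)]
  simpa using norm_integral_le_of_norm_le_const (μ := ν) (C := c i)
    (ae_of_all _ fun z ↦ (Real.norm_eq_abs _).trans_le (hF z y i w))

end BoundedDifferences

theorem hasSubgaussianMGF_pi_sub_integral {n : ℕ} {α : Fin n → Type u}
    [∀ i, MeasurableSpace (α i)] (ν : ∀ i, Measure (α i)) [∀ i, IsProbabilityMeasure (ν i)]
    {f : (∀ i, α i) → ℝ} (hf : Measurable f) {c : Fin n → ℝ≥0}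
    (hfc : HasBoundedDifferences f c) :
    HasSubgaussianMGF (fun x ↦ f x - ∫ y, f y ∂Measure.pi ν) (∑ i, (c i / 2) ^ 2)
      (Measure.pi ν) := by
  induction n with
  | zero =>
    have hconst (x : ∀ i, α i) : ∫ y, f y ∂Measure.pi ν = f x := by
      simp [fun y ↦ congrArg f (Subsingleton.elim y x)]
    have hzero : (fun x ↦ f x - ∫ y, f y ∂Measure.pi ν) = fun _ ↦ 0 := by
      funext x
      rw [hconst x, sub_self]
    rw [hzero, Finset.univ_eq_empty, Finset.sum_empty]
    exact HasSubgaussianMGF.fun_zero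
  | succ n ih =>
    set e := MeasurableEquiv.piFinSuccAbove α 0
    have he := measurePreserving_piFinSuccAbove ν 0
    set F := fun q ↦ f (e.symm q)
    have hF : Measurable F := hf.comp e.symm.measurable
    have hosc (x x' y) : |F (x, y) - F (x', y)| ≤ c 0 := hfc.abs_sub_insertNth_le 0 x x' y
    have hsection (y) : Integrable (fun x ↦ F (x, y)) (ν 0) :=
      integrable_of_abs_sub_le (hF.comp measurable_prodMk_right).aemeasurable
        fun x x' ↦ hosc x x' y
    have hB := ih (fun j ↦ ν (Fin.succAbove 0 j))
      hF.stronglyMeasurable.integral_prod_left'.measurable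
      (HasBoundedDifferences.integral (fun x ↦ hfc.comp_insertNth 0 x) hsection)
    have hmean : ∫ q, F q ∂(ν 0).prod (Measure.pi fun j ↦ ν (Fin.succAbove 0 j)) =
        ∫ x, f x ∂Measure.pi ν := by
      rw [← he.integral_comp']
      simp only [F, e, MeasurableEquiv.symm_apply_apply]
    have hstep := hasSubgaussianMGF_prod_sub_integral hF hosc hB
    rw [hmean, ← he.map_eq] at hstep
    rw [Fin.sum_univ_succAbove _ 0]
    convert hstep.of_map e.measurable.aemeasurable using 2 with x
    simp only [Function.comp_apply, F, e, MeasurableEquiv.symm_apply_apply]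

end ProbabilityTheory

theorem mcdiarmid_inequality_general {Ω : Type*} [MeasurableSpace Ω] (μ : Measure Ω)
    [IsProbabilityMeasure μ] {𝒳 : Type*} [MeasurableSpace 𝒳] (m : ℕ)
    (X : Fin m → Ω → 𝒳) (hX : ∀ i, Measurable (X i))
    (hindep : iIndepFun X μ)
    (f : (Fin m → 𝒳) → ℝ) (hf : Measurable f)
    (c : Fin m → ℝ)
    (hbd : ∀ (x : Fin m → 𝒳) (i : Fin m) (x' : 𝒳),
      |f x - f (Function.update x i x')| ≤ c i)
    (ε : ℝ) (hε : 0 < ε) :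
    (μ {ω | f (fun i => X i ω) - ∫ ω', f (fun i => X i ω') ∂μ ≥ ε}).toReal ≤
      Real.exp (-2 * ε ^ 2 / ∑ i, c i ^ 2) := by
  have hfc : HasBoundedDifferences f fun i ↦ ‖c i‖₊ := fun x i x' ↦
    (hbd x i x').trans (le_abs_self (c i))
  have : ∀ i, IsProbabilityMeasure (μ.map (X i)) := fun i ↦
    Measure.isProbabilityMeasure_map (hX i).aemeasurable
  have hvec : Measurable fun ω i ↦ X i ω := measurable_pi_lambda _ hX
  have hsub := hasSubgaussianMGF_pi_sub_integral (fun i ↦ μ.map (X i)) hf hfc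
  rw [← hindep.map_fun_eq_pi_map fun i ↦ (hX i).aemeasurable,
    integral_map hvec.aemeasurable hf.aestronglyMeasurable] at hsub
  have hparam : ((∑ i, (‖c i‖₊ / 2) ^ 2 : ℝ≥0) : ℝ) = (∑ i, c i ^ 2) / 4 := by
    push_cast
    simp_rw [div_pow, Real.norm_eq_abs, sq_abs, ← Finset.sum_div]
    norm_num
  calc (μ {ω | f (fun i => X i ω) - ∫ ω', f (fun i => X i ω') ∂μ ≥ ε}).toReal
      ≤ Real.exp (-ε ^ 2 / (2 * ((∑ i, c i ^ 2) / 4))) := by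
        rw [← hparam]
        exact (hsub.of_map hvec.aemeasurable).measure_ge_le hε.le
    _ = Real.exp (-2 * ε ^ 2 / ∑ i, c i ^ 2) := by ring_nf

theorem mcdiarmid_inequality {Ω : Type*} [MeasurableSpace Ω] (μ : Measure Ω)
    [IsProbabilityMeasure μ] {𝒳 : Type*} [MeasurableSpace 𝒳] (m : ℕ)
    (X : Fin m → Ω → 𝒳) (hX : ∀ i, Measurable (X i))
    (hindep : iIndepFun X μ)
    (f : (Fin m → 𝒳) → ℝ) (hf : Measurable f)
    (hint : Integrable (fun ω => f (fun i => X i ω)) μ)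
    (c : Fin m → ℝ) (hc : ∀ i, 0 < c i)
    (hbd : ∀ (x : Fin m → 𝒳) (i : Fin m) (x' : 𝒳),
      |f x - f (Function.update x i x')| ≤ c i)
    (ε : ℝ) (hε : 0 < ε) :
    (μ {ω | f (fun i => X i ω) - ∫ ω', f (fun i => X i ω') ∂μ ≥ ε}).toReal ≤
      Real.exp (-2 * ε ^ 2 / ∑ i, c i ^ 2) :=
  mcdiarmid_inequality_general μ m X hX hindep f hf c hbd ε hε
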